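/- arXiv:1507.00548 — 2 statements merged into one kernel-verified Lean document; each statement's English description precedes it below -/
import Mathlib

section
/- Assume (Wright's theorem) that every nonempty finite subset of the positive integers is a set of quadratic residues for infinitely many primes. Define f(p) for a prime p as p minus the largest quadratic residue of p in {1,...,p-1}. Then f is unbounded: for every N there exists a prime p with f(p) > N. -/
/-- `i` is a quadratic residue of `p`. -/
def IsQR (p i : ℕ) : Prop := ∃ x : ℤ, x^2 ≡ (i : ℤ) [ZMOD (p : ℤ)]

/-- `f p = p - max{i : 1 ≤ i ≤ p-1 and i is a quadratic residue of p}`. -/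
noncomputable def fQR (p : ℕ) : ℕ := p - sSup {i : ℕ | 1 ≤ i ∧ i ≤ p - 1 ∧ IsQR p i}

lemma isQR_iff_isSquare (p i : ℕ) : IsQR p i ↔ IsSquare ((i : ZMod p)) := by
  constructor
  · rintro ⟨x, hx⟩
    have h : ((x ^ 2 : ℤ) : ZMod p) = (((i : ℕ) : ℤ) : ZMod p) :=
      (ZMod.intCast_eq_intCast_iff _ _ _).mpr hx
    push_cast at h
    exact ⟨(x : ZMod p), by rw [← h]; ring⟩
  · rintro ⟨r, hr⟩
    obtain ⟨x, rfl⟩ := ZMod.intCast_surjective r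
    refine ⟨x, (ZMod.intCast_eq_intCast_iff _ _ _).mp ?_⟩
    push_cast
    rw [hr]; ring

lemma prime_isSquare {p q : ℕ} (pp : p.Prime) (qp : q.Prime)
    (hp4 : p % 4 = 3) (hp8 : p % 8 = 7) (hq : (p : ZMod q) = -1) (hne : p ≠ q) :
    IsSquare ((q : ZMod p)) := by
  haveI : Fact p.Prime := ⟨pp⟩
  haveI : Fact q.Prime := ⟨qp⟩
  have hp2 : p ≠ 2 := by
    intro h; rw [h] at hp4; norm_num at hp4
  rcases eq_or_ne q 2 with h2 | h2
  · subst h2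
    exact (ZMod.exists_sq_eq_two_iff hp2).mpr (Or.inr hp8)
  · have hqodd : q % 2 = 1 := Nat.odd_iff.mp (qp.odd_of_ne_two h2)
    have hq4 : q % 4 = 1 ∨ q % 4 = 3 := by omega
    rcases hq4 with hq4 | hq4
    · rw [← ZMod.exists_sq_eq_prime_iff_of_mod_four_eq_one hq4 hp2, hq]
      exact ZMod.exists_sq_eq_neg_one_iff.mpr (by omega)
    · rw [ZMod.exists_sq_eq_prime_iff_of_mod_four_eq_three hp4 hq4 hne, hq]
      rw [ZMod.exists_sq_eq_neg_one_iff]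
      simp [hq4]

lemma all_isSquare {p N : ℕ} (pp : p.Prime) (hp4 : p % 4 = 3) (hp8 : p % 8 = 7)
    (hq : ∀ q : ℕ, q.Prime → q ≤ N → (p : ZMod q) = -1) (hpN : N < p) :
    ∀ j : ℕ, 1 ≤ j → j ≤ N → IsSquare ((j : ZMod p)) := by
  intro j
  induction j using Nat.strong_induction_on with
  | _ j ih =>
    intro h1 hN
    rcases eq_or_lt_of_le h1 with h | h
    · rw [← h]; exact ⟨1, by norm_num⟩
    · by_cases hj : j.Prime
      · exact prime_isSquare pp hj hp4 hp8 (hq j hj hN) (by omega)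
      · obtain ⟨m, hm, h2m, hmj⟩ := Nat.exists_dvd_of_not_prime2 (by omega) hj
        obtain ⟨k, rfl⟩ := hm
        have hk1 : 1 ≤ k := by
          rcases k with _ | k
          · simp at h1
          · omega
        have hkj : k < m * k := by
          nlinarith
        have h1 := ih m hmj (by omega) (by omega)
        have h2 := ih k hkj hk1 (le_trans (le_of_lt hkj) hN)
        rw [Nat.cast_mul]
        exact h1.mul h2

theorem stmt_9
    (hWright : ∀ S : Finset ℕ, S.Nonempty → (∀ i ∈ S, 0 < i) →
      {p : ℕ | p.Prime ∧ ∀ i ∈ S, IsQR p i}.Infinite) :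
    ∀ N : ℕ, ∃ p : ℕ, p.Prime ∧ fQR p > N := by
  intro N
  set M : ℕ := 8 * Nat.factorial (N + 1) with hM
  have hMpos : 0 < M := by positivity
  haveI : NeZero M := ⟨by omega⟩
  have ha : IsUnit (-1 : ZMod M) := isUnit_one.neg
  obtain ⟨p, hpgt, pp, hpmod⟩ := Nat.forall_exists_prime_gt_and_eq_mod ha (M + N + 2)
  haveI : Fact p.Prime := ⟨pp⟩
  -- transfer the congruence to divisors of M
  have hdvd : ∀ d : ℕ, d ∣ M → (p : ZMod d) = -1 := by
    intro d hd
    have := congrArg (ZMod.castHom hd (ZMod d)) hpmod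
    rwa [map_natCast, map_neg, map_one] at this
  have h8 : p % 8 = 7 := by
    have h := hdvd 8 ⟨Nat.factorial (N + 1), rfl⟩
    have : (p : ZMod 8).val = (-1 : ZMod 8).val := by rw [h]
    rwa [ZMod.val_natCast] at this
  have h4 : p % 4 = 3 := by omega
  have hMbig : N + 2 < p := by
    have : N + 1 ≤ Nat.factorial (N + 1) := Nat.self_le_factorial _
    omega
  -- every 1 ≤ j ≤ N is a square mod p
  have hsq : ∀ j : ℕ, 1 ≤ j → j ≤ N → IsSquare ((j : ZMod p)) := by
    apply all_isSquare pp h4 h8 _ (by omega)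
    intro q hq hqN
    apply hdvd
    rcases eq_or_ne q 2 with rfl | hq2
    · exact Dvd.dvd.mul_right ⟨4, rfl⟩ _
    · exact Dvd.dvd.mul_left (Nat.dvd_factorial hq.pos (by omega)) 8
  -- -1 is not a square mod p
  have hneg : ¬ IsSquare (-1 : ZMod p) := by
    rw [ZMod.exists_sq_eq_neg_one_iff]
    simp [h4]
  -- hence p - j is not a QR for 1 ≤ j ≤ N
  have hnot : ∀ j : ℕ, 1 ≤ j → j ≤ N → ¬ IsQR p (p - j) := by
    intro j h1 hN hQR
    rw [isQR_iff_isSquare] at hQR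
    have hcast : ((p - j : ℕ) : ZMod p) = -(j : ZMod p) := by
      rw [Nat.cast_sub (by omega), ZMod.natCast_self, zero_sub]
    rw [hcast] at hQR
    have hj0 : (j : ZMod p) ≠ 0 := by
      rw [Ne, ZMod.natCast_eq_zero_iff]
      intro hdd
      have := Nat.le_of_dvd (by omega) hdd
      omega
    apply hneg
    have := hQR.mul ((hsq j h1 hN).inv)
    rwa [neg_mul, mul_inv_cancel₀ hj0] at this
  -- bound the sup
  set T : Set ℕ := {i : ℕ | 1 ≤ i ∧ i ≤ p - 1 ∧ IsQR p i} with hT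
  have hsup : sSup T ≤ p - 1 - N := by
    apply csSup_le
    · exact ⟨1, by constructor; omega; constructor; omega; exact ⟨1, by simp [Int.ModEq]⟩⟩
    · rintro i ⟨hi1, hi2, hiQR⟩
      by_contra hcon
      push_neg at hcon
      have hji : i = p - (p - i) := by omega
      exact hnot (p - i) (by omega) (by omega) (hji ▸ hiQR)
  refine ⟨p, pp, ?_⟩
  have : fQR p = p - sSup T := rfl
  omega
end

section
/- In any meadow (a commutative ring with 1 equipped with a total unary operation x ↦ x⁻¹ satisfying (x⁻¹)⁻¹ = x and x·(x·x⁻¹) = x), the identity 0⁻¹ = 0 holds. -/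
theorem stmt_12 {M : Type*} [CommRing M] (inv : M → M)
    (hrefl : ∀ x, inv (inv x) = x) (hril : ∀ x, x * (x * inv x) = x) :
    inv 0 = 0 := by
  have h := hril (inv 0)
  rw [hrefl 0, mul_zero, mul_zero] at h
  exact h.symm
end
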